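/- In misère Red-Blue Hackenbush, if R ≥ B ≥ 1 and Left moves first by repeatedly removing his grounded blue edges, then after Left exhausts his grounded blue edges at least one grounded red edge remains, and Left wins whether he is then to move first or second. -/
import Mathlib


open scoped Classical

/-- Edge colours for Hackenbush. -/
inductive HColor : Type
  | blue | red | green
  deriving DecidableEq

/-- A Hackenbush position: a finite coloured graph with ground vertices. -/
structure HPos (V : Type) [Fintype V] [DecidableEq V] : Type where
  edges : Finset (Sym2 V)
  color : Sym2 V → HColor
  ground : Finset V

variable {V : Type} [Fintype V] [DecidableEq V]

/-- The edges of `E` still connected to the ground `g`. -/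
noncomputable def alive (E : Finset (Sym2 V)) (g : Finset V) : Finset (Sym2 V) :=
  E.filter fun e => ∃ v ∈ g, ∃ w ∈ e, (SimpleGraph.fromEdgeSet (E : Set (Sym2 V))).Reachable v w

/-- Cut the edge `e`: remove it, and delete all edges disconnected from the ground. -/
noncomputable def HPos.cut (p : HPos V) (e : Sym2 V) : HPos V :=
  ⟨alive (p.edges.erase e) p.ground, p.color, p.ground⟩

/-- Left removes blue (or green) edges. -/
def leftMove (p q : HPos V) : Prop :=
  ∃ e ∈ p.edges, (p.color e = HColor.blue ∨ p.color e = HColor.green) ∧ q = p.cut e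

/-- Right removes red (or green) edges. -/
def rightMove (p q : HPos V) : Prop :=
  ∃ e ∈ p.edges, (p.color e = HColor.red ∨ p.color e = HColor.green) ∧ q = p.cut e

/-- Moves indexed by player: `true` = Left, `false` = Right. -/
def hackMoves : Bool → HPos V → HPos V → Prop
  | true => leftMove
  | false => rightMove

/-- Number of grounded edges of colour `c`. -/
noncomputable def groundedCount (p : HPos V) (c : HColor) : ℕ :=
  (p.edges.filter fun e => p.color e = c ∧ ∃ v ∈ p.ground, v ∈ e).card

/-- `B`: number of grounded blue edges. -/
noncomputable def blueCount (p : HPos V) : ℕ := groundedCount p HColor.blue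
/-- `R`: number of grounded red edges. -/
noncomputable def redCount (p : HPos V) : ℕ := groundedCount p HColor.red

/-- A Red-Blue position: no green edges. -/
def NoGreen (p : HPos V) : Prop := ∀ e ∈ p.edges, p.color e ≠ HColor.green

/-- Every edge of the position is connected to the ground. -/
def AllAlive (p : HPos V) : Prop := alive p.edges p.ground = p.edges

section Games
variable {Pos : Type} (moves : Bool → Pos → Pos → Prop)

/-- `MisWins moves pl t p`: player `pl` wins the misère-play game from position `p`
with player `t` to move (a player unable to move wins). -/
inductive MisWins : Bool → Bool → Pos → Prop
  | terminal {t : Bool} {p : Pos} : (∀ q, ¬ moves t p q) → MisWins t t p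
  | move {pl : Bool} {p q : Pos} : moves pl p q → MisWins pl (!pl) q → MisWins pl pl p
  | opp {pl t : Bool} {p : Pos} : pl ≠ t → (∃ q, moves t p q) →
      (∀ q, moves t p q → MisWins pl (!t) q) → MisWins pl t p

/-- `NorWins moves pl t p`: player `pl` wins the normal-play game from position `p`
with player `t` to move (a player unable to move loses). -/
inductive NorWins : Bool → Bool → Pos → Prop
  | move {pl : Bool} {p q : Pos} : moves pl p q → NorWins pl (!pl) q → NorWins pl pl p
  | opp {pl t : Bool} {p : Pos} : pl ≠ t →
      (∀ q, moves t p q → NorWins pl (!t) q) → NorWins pl t p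

/-- Adjoin a single "green edge": from any position either player may instead end
the game entirely; the terminal position `none` has no moves. -/
def addGreen : Bool → Option Pos → Option Pos → Prop :=
  fun t op oq =>
    match op with
    | none => False
    | some p => (∃ q, moves t p q ∧ oq = some q) ∨ oq = none

end Games

/-- Outcome class `L`: Left wins moving first or second (misère play). -/
def outL (p : HPos V) : Prop := MisWins hackMoves true true p ∧ MisWins hackMoves true false p
/-- Outcome class `R`: Right wins moving first or second (misère play). -/
def outR (p : HPos V) : Prop := MisWins hackMoves false true p ∧ MisWins hackMoves false false p
/-- Outcome class `N`: the first player wins (misère play). -/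
def outN (p : HPos V) : Prop := MisWins hackMoves true true p ∧ MisWins hackMoves false false p
/-- Outcome class `P`: the second player wins (misère play). -/
def outP (p : HPos V) : Prop := MisWins hackMoves true false p ∧ MisWins hackMoves false true p


section Aux
variable {V : Type} [Fintype V] [DecidableEq V]

lemma mem_alive_iff {E : Finset (Sym2 V)} {g : Finset V} {e : Sym2 V} :
    e ∈ alive E g ↔ e ∈ E ∧ ∃ v ∈ g, ∃ w ∈ e,
      (SimpleGraph.fromEdgeSet (E : Set (Sym2 V))).Reachable v w := by
  simp [alive]

lemma mem_alive_of_grounded {E : Finset (Sym2 V)} {g : Finset V} {e : Sym2 V}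
    (he : e ∈ E) {v : V} (hv : v ∈ g) (hve : v ∈ e) : e ∈ alive E g :=
  mem_alive_iff.2 ⟨he, v, hv, v, hve, SimpleGraph.Reachable.refl v⟩

lemma walk_alive {E : Finset (Sym2 V)} {g : Finset V} {v : V} (hv : v ∈ g) :
    ∀ {u w : V}, (SimpleGraph.fromEdgeSet (E : Set (Sym2 V))).Walk u w →
      (SimpleGraph.fromEdgeSet ((alive E g : Finset (Sym2 V)) : Set (Sym2 V))).Reachable v u →
      (SimpleGraph.fromEdgeSet ((alive E g : Finset (Sym2 V)) : Set (Sym2 V))).Reachable v w := by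
  intro u w W
  induction W with
  | nil => exact id
  | @cons a b c h _ ih =>
    intro hu
    have hE := (SimpleGraph.fromEdgeSet_adj _).1 h
    have hru : (SimpleGraph.fromEdgeSet (E : Set (Sym2 V))).Reachable v a :=
      hu.mono (SimpleGraph.fromEdgeSet_mono
        (by exact_mod_cast Finset.filter_subset _ _))
    have hmem : s(a,b) ∈ alive E g :=
      mem_alive_iff.2 ⟨by exact_mod_cast hE.1, v, hv, a, Sym2.mem_mk_left a b, hru⟩
    have hadj : (SimpleGraph.fromEdgeSet ((alive E g : Finset (Sym2 V)) : Set (Sym2 V))).Adj a b :=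
      (SimpleGraph.fromEdgeSet_adj _).2 ⟨by exact_mod_cast hmem, hE.2⟩
    exact ih (hu.trans hadj.reachable)

lemma alive_idem (E : Finset (Sym2 V)) (g : Finset V) :
    alive (alive E g) g = alive E g := by
  apply Finset.Subset.antisymm (Finset.filter_subset _ _)
  intro e he
  obtain ⟨heE, v, hv, w, hw, hr⟩ := mem_alive_iff.1 he
  obtain ⟨W⟩ := hr
  exact mem_alive_iff.2 ⟨he, v, hv, w, hw, walk_alive hv W (SimpleGraph.Reachable.refl v)⟩

lemma exists_grounded {E : Finset (Sym2 V)} {g : Finset V} {e : Sym2 V}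
    (he : e ∈ alive E g) : ∃ f ∈ E, ∃ v ∈ g, v ∈ f := by
  obtain ⟨heE, v, hv, w, hw, hr⟩ := mem_alive_iff.1 he
  obtain ⟨W⟩ := hr
  cases W with
  | nil => exact ⟨e, heE, v, hv, hw⟩
  | @cons a b c h W =>
    have hE := (SimpleGraph.fromEdgeSet_adj _).1 h
    exact ⟨s(v, b), by exact_mod_cast hE.1, v, hv, Sym2.mem_mk_left v b⟩

lemma cut_edges_subset (p : HPos V) (e : Sym2 V) : (p.cut e).edges ⊆ p.edges :=
  fun f hf => Finset.mem_of_mem_erase (Finset.filter_subset _ _ hf)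

lemma cut_card_lt {p : HPos V} {e : Sym2 V} (he : e ∈ p.edges) :
    (p.cut e).edges.card < p.edges.card :=
  lt_of_le_of_lt (Finset.card_le_card (Finset.filter_subset _ _))
    (Finset.card_erase_lt_of_mem he)

lemma cut_noGreen {p : HPos V} (h : NoGreen p) (e : Sym2 V) : NoGreen (p.cut e) :=
  fun f hf => h f (cut_edges_subset p e hf)

lemma cut_allAlive (p : HPos V) (e : Sym2 V) : AllAlive (p.cut e) :=
  alive_idem _ _

lemma cut_filter (p : HPos V) (e : Sym2 V) (c : HColor) :
    ((p.cut e).edges.filter fun f => (p.cut e).color f = c ∧ ∃ v ∈ (p.cut e).ground, v ∈ f)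
      = (p.edges.filter fun f => p.color f = c ∧ ∃ v ∈ p.ground, v ∈ f).erase e := by
  ext f
  simp only [Finset.mem_filter, Finset.mem_erase]
  constructor
  · rintro ⟨hf, hc, hg⟩
    have hf' : f ∈ p.edges.erase e := Finset.filter_subset _ _ hf
    exact ⟨(Finset.mem_erase.1 hf').1, (Finset.mem_erase.1 hf').2, hc, hg⟩
  · rintro ⟨hne, hf, hc, v, hv, hvf⟩
    exact ⟨mem_alive_of_grounded (Finset.mem_erase.2 ⟨hne, hf⟩) hv hvf, hc, v, hv, hvf⟩

lemma groundedCount_cut (p : HPos V) (e : Sym2 V) (c : HColor) :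
    groundedCount (p.cut e) c
      = ((p.edges.filter fun f => p.color f = c ∧ ∃ v ∈ p.ground, v ∈ f).erase e).card :=
  congrArg Finset.card (cut_filter p e c)

lemma groundedCount_cut_of_ne {p : HPos V} {e : Sym2 V} {c : HColor}
    (h : p.color e ≠ c) : groundedCount (p.cut e) c = groundedCount p c := by
  rw [groundedCount_cut, Finset.erase_eq_of_notMem]
  · rfl
  · intro hmem
    exact h (Finset.mem_filter.1 hmem).2.1

lemma groundedCount_cut_of_mem {p : HPos V} {e : Sym2 V} {c : HColor}
    (he : e ∈ p.edges) (hc : p.color e = c) (hg : ∃ v ∈ p.ground, v ∈ e) :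
    groundedCount (p.cut e) c = groundedCount p c - 1 := by
  rw [groundedCount_cut, Finset.card_erase_of_mem (Finset.mem_filter.2 ⟨he, hc, hg⟩)]
  rfl

lemma groundedCount_cut_le (p : HPos V) (e : Sym2 V) (c : HColor) :
    groundedCount p c - 1 ≤ groundedCount (p.cut e) c := by
  rw [groundedCount_cut]
  exact Finset.pred_card_le_card_erase

lemma groundedCount_pos_iff {p : HPos V} {c : HColor} :
    1 ≤ groundedCount p c ↔ ∃ e ∈ p.edges, p.color e = c ∧ ∃ v ∈ p.ground, v ∈ e := by
  rw [groundedCount, Finset.one_le_card]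
  constructor
  · rintro ⟨e, he⟩
    obtain ⟨h1, h2⟩ := Finset.mem_filter.1 he
    exact ⟨e, h1, h2⟩
  · rintro ⟨e, h1, h2⟩
    exact ⟨e, Finset.mem_filter.2 ⟨h1, h2⟩⟩

lemma master : ∀ (n : ℕ) (q : HPos V), q.edges.card ≤ n → NoGreen q → AllAlive q →
    (blueCount q ≤ redCount q → MisWins hackMoves true true q) ∧
    (blueCount q < redCount q → MisWins hackMoves true false q) := by
  intro n
  induction n with
  | zero =>
    intro q hcard hng hal
    have he : q.edges = ∅ := Finset.card_eq_zero.1 (Nat.le_zero.1 hcard)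
    constructor
    · intro _
      refine MisWins.terminal ?_
      rintro q' ⟨e, heq, -⟩
      simp [he] at heq
    · intro hlt
      exfalso
      have : redCount q = 0 := by
        simp [redCount, groundedCount, he]
      omega
  | succ n ih =>
    intro q hcard hng hal
    have key : ∀ e ∈ q.edges, q.color e = HColor.blue →
        blueCount (q.cut e) < redCount (q.cut e) →
        MisWins hackMoves true true q := by
      intro e he hce hlt
      have hcard' : (q.cut e).edges.card ≤ n :=
        Nat.lt_succ_iff.1 (lt_of_lt_of_le (cut_card_lt he) hcard)
      have hw := (ih (q.cut e) hcard' (cut_noGreen hng e) (cut_allAlive q e)).2 hlt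
      exact MisWins.move (pl := true) ⟨e, he, Or.inl hce, rfl⟩ hw
    constructor
    · -- Left to move, B ≤ R
      intro hBR
      by_cases hB : 1 ≤ blueCount q
      · -- cut a grounded blue edge
        obtain ⟨e, he, hce, hg⟩ := groundedCount_pos_iff.1 hB
        refine key e he hce ?_
        have h1 : blueCount (q.cut e) = blueCount q - 1 :=
          groundedCount_cut_of_mem he hce hg
        have h2 : redCount (q.cut e) = redCount q :=
          groundedCount_cut_of_ne (by rw [hce]; intro h; cases h)
        omega
      · -- B = 0
        by_cases hb : ∃ e ∈ q.edges, q.color e = HColor.blue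
        · obtain ⟨e, he, hce⟩ := hb
          refine key e he hce ?_
          have h1 : blueCount (q.cut e) ≤ blueCount q := by
            rw [blueCount, groundedCount_cut]
            exact Finset.card_le_card
              (Finset.subset_of_eq rfl |>.trans (Finset.erase_subset _ _))
          -- redCount q ≥ 1 : some grounded edge exists, and it cannot be blue
          have heA : e ∈ alive q.edges q.ground := by rw [hal]; exact he
          obtain ⟨f, hf, v, hv, hvf⟩ := exists_grounded heA
          have hfc : q.color f = HColor.red := by
            cases hc : q.color f with
            | blue =>
              exact absurd (groundedCount_pos_iff.2 ⟨f, hf, hc, v, hv, hvf⟩) hB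
            | red => rfl
            | green => exact absurd hc (hng f hf)
          have hR : 1 ≤ redCount q := groundedCount_pos_iff.2 ⟨f, hf, hfc, v, hv, hvf⟩
          have h2 : redCount (q.cut e) = redCount q :=
            groundedCount_cut_of_ne (by rw [hce]; intro h; cases h)
          omega
        · refine MisWins.terminal ?_
          rintro q' ⟨e, he, hcol, -⟩
          rcases hcol with hcol | hcol
          · exact hb ⟨e, he, hcol⟩
          · exact hng e he hcol
    · -- Right to move, B < R
      intro hBR
      have hR : 1 ≤ redCount q := by omega
      obtain ⟨e₀, he₀, hc₀, hg₀⟩ := groundedCount_pos_iff.1 hR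
      refine MisWins.opp (by simp) ⟨q.cut e₀, e₀, he₀, Or.inl hc₀, rfl⟩ ?_
      rintro q' ⟨e, he, hcol, rfl⟩
      have hce : q.color e = HColor.red := by
        rcases hcol with h | h
        · exact h
        · exact absurd h (hng e he)
      have h1 : blueCount (q.cut e) = blueCount q :=
        groundedCount_cut_of_ne (by rw [hce]; intro h; cases h)
      have h2 : redCount q - 1 ≤ redCount (q.cut e) := groundedCount_cut_le q e _
      have hcard' : (q.cut e).edges.card ≤ n :=
        Nat.lt_succ_iff.1 (lt_of_lt_of_le (cut_card_lt he) hcard)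
      exact (ih (q.cut e) hcard' (cut_noGreen hng e) (cut_allAlive q e)).1 (by omega)

end Aux

/-- If R ≥ B ≥ 1 then Left, moving first and repeatedly removing his
grounded blue edges, wins; moreover once Left's grounded blue edges are exhausted any
position with at least one grounded red edge remaining is won by Left whether he moves
first or second. -/
theorem misere_rb_left_strategy (p : HPos V) (hrb : NoGreen p) (hal : AllAlive p) :
    (1 ≤ blueCount p → blueCount p ≤ redCount p → MisWins hackMoves true true p) ∧
    (∀ q : HPos V, NoGreen q → AllAlive q → blueCount q = 0 → 1 ≤ redCount q →
      MisWins hackMoves true true q ∧ MisWins hackMoves true false q) := by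
  constructor
  · intro _ hBR
    exact (master p.edges.card p le_rfl hrb hal).1 hBR
  · intro q hng hal' hb hr
    have h := master q.edges.card q le_rfl hng hal'
    exact ⟨h.1 (by omega), h.2 (by omega)⟩
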